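/- arXiv:2602.12551 — 3 statements merged into one kernel-verified Lean document; each statement's English description precedes it below -/
import Mathlib

section
/- Every non-transitive finite tournament that contains no subtournament isomorphic to W₄, no subtournament isomorphic to L₄, and no subtournament isomorphic to C₅ is isomorphic to T[a,b,c] for some positive integers a, b, c. -/
open MeasureTheory

noncomputable section

/-- The unit interval as a subset of `ℝ`. -/
def I01 : Set ℝ := Set.Icc 0 1

/-- A tournamenton: a measurable `W : [0,1]² → [0,1]` with `W x y + W y x = 1`. -/
def IsTournamenton (W : ℝ → ℝ → ℝ) : Prop :=
  Measurable (Function.uncurry W) ∧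
  ∀ x ∈ I01, ∀ y ∈ I01, 0 ≤ W x y ∧ W x y ≤ 1 ∧ W x y + W y x = 1

/-- A tournamenton is regular if almost every vertex has out-degree `1/2`. -/
def IsRegularT (W : ℝ → ℝ → ℝ) : Prop :=
  ∀ᵐ x : ℝ, x ∈ I01 → (∫ y in I01, W x y) = 1 / 2

/-- `W` equals `1/2` almost everywhere on `[0,1]²`. -/
def ConstHalf (W : ℝ → ℝ → ℝ) : Prop :=
  ∀ᵐ p : ℝ × ℝ, p ∈ I01 ×ˢ I01 → W p.1 p.2 = 1 / 2

open scoped Classical in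
/-- Homomorphism density of the digraph with vertex set `V` and edge relation `E`
in the tournamenton `W`. -/
def homDensity {V : Type} [Fintype V] (E : V → V → Prop) (W : ℝ → ℝ → ℝ) : ℝ :=
  ∫ x in Set.univ.pi (fun _ : V => I01),
    ∏ p ∈ Finset.univ.filter (fun p : V × V => E p.1 p.2), W (x p.1) (x p.2)

/-- `E` is the edge relation of a tournament. -/
def IsTournament {V : Type} (E : V → V → Prop) : Prop :=
  (∀ v, ¬ E v v) ∧ ∀ u v : V, u ≠ v → (E u v ↔ ¬ E v u)

/-- the edge relation is transitive (for a tournament: a strict linear order). -/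
def IsTransitive {V : Type} (E : V → V → Prop) : Prop :=
  ∀ u v w : V, E u v → E v w → E u w

/-- Vertex set of the blow-up `C[a,b,c]` of the cyclic triangle. -/
abbrev CV (a b c : ℕ) := Fin a ⊕ Fin b ⊕ Fin c

/-- Which of the three parts a vertex belongs to. -/
def cpart {a b c : ℕ} : CV a b c → Fin 3
  | .inl _ => 0
  | .inr (.inl _) => 1
  | .inr (.inr _) => 2

/-- Index of a vertex inside its part. -/
def cidx {a b c : ℕ} : CV a b c → ℕ
  | .inl i => i
  | .inr (.inl i) => i
  | .inr (.inr i) => i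

/-- Edges of `C[a,b,c]`: all edges from part 0 to part 1, part 1 to part 2 and
part 2 to part 0; no edges inside parts. -/
def CEdge (a b c : ℕ) (u v : CV a b c) : Prop := cpart v = cpart u + 1

/-- Edges of the tournament `T[a,b,c]`: `C[a,b,c]` plus a transitive tournament on
each of the three parts. -/
def TEdge (a b c : ℕ) (u v : CV a b c) : Prop :=
  cpart v = cpart u + 1 ∨ (cpart u = cpart v ∧ cidx u < cidx v)

/-- Edges of `B[c]`: the digraph `C[1,1,c]` minus the edge between the two singleton
parts (a source, `c` middle vertices, a sink). -/
def BEdge (c : ℕ) (u v : CV 1 1 c) : Prop :=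
  cpart v = cpart u + 1 ∧ cpart u ≠ 0

/-- `E` is isomorphic to the tournament `T[a,b,c]`. -/
def IsoToT {V : Type} (E : V → V → Prop) (a b c : ℕ) : Prop :=
  ∃ e : V ≃ CV a b c, ∀ u v : V, E u v ↔ TEdge a b c (e u) (e v)

/-- The tournament `E` contains a subtournament isomorphic to `E'`. -/
def ContainsSub {V V' : Type} (E : V → V → Prop) (E' : V' → V' → Prop) : Prop :=
  ∃ f : V' → V, Function.Injective f ∧ ∀ u v : V', E' u v ↔ E (f u) (f v)

/-- The tournament `W₄`: a source dominating a cyclic triangle. -/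
def W4Edge (u v : Fin 4) : Prop :=
  (u = 0 ∧ v ≠ 0) ∨ (u = 1 ∧ v = 2) ∨ (u = 2 ∧ v = 3) ∨ (u = 3 ∧ v = 1)

/-- The tournament `L₄`: a sink dominated by a cyclic triangle. -/
def L4Edge (u v : Fin 4) : Prop :=
  (v = 0 ∧ u ≠ 0) ∨ (u = 1 ∧ v = 2) ∨ (u = 2 ∧ v = 3) ∨ (u = 3 ∧ v = 1)

/-- The 5-vertex carousel tournament `C₅`. -/
def C5Edge (u v : ZMod 5) : Prop := v - u = 1 ∨ v - u = 2


/-!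
Fix a cyclic triangle `t 0 → t 1 → t 2 → t 0`. A vertex dominating, or dominated by, the whole
triangle would span a `W₄` or an `L₄`, so every vertex `v` relates to the triangle as some `t i`
does: `v → t (i + 1)` and `t (i + 2) → v`. This splits the vertices into three classes. Every
edge between two classes goes from class `i` to class `i + 1`, as the other orientation creates a
`W₄`, an `L₄` or a `C₅`; and class `i` is transitive, because a cyclic triangle inside it would
form an `L₄` with `t (i + 1)`. A tournament of this shape is `T[a,b,c]`.
-/

section

variable {V : Type} {E : V → V → Prop}

namespace IsTournament

lemma asymm (hT : IsTournament E) {u v : V} (h : E u v) : ¬ E v u := by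
  by_cases huv : u = v
  · subst huv
    exact absurd h (hT.1 u)
  · exact (hT.2 u v huv).1 h

lemma total (hT : IsTournament E) {u v : V} (huv : u ≠ v) : E u v ∨ E v u := by
  by_contra! h
  exact h.1 ((hT.2 u v huv).2 h.2)

lemma comap {W : Type} (hT : IsTournament E) {f : W → V} (hf : Function.Injective f) :
    IsTournament fun a b => E (f a) (f b) :=
  ⟨fun a => hT.1 (f a), fun a b hab => hT.2 (f a) (f b) (hf.ne hab)⟩

lemma containsSub_of_relHom {V' : Type} {E' : V' → V' → Prop} (hT : IsTournament E)
    (hT' : IsTournament E') (f : E' →r E) : ContainsSub E E' := by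
  refine ⟨f, fun u v huv => ?_, fun u v => ⟨f.map_rel, fun h => ?_⟩⟩
  · by_contra hne
    rcases hT'.total hne with h | h <;> have h' := f.map_rel h <;> rw [huv] at h' <;>
      exact hT.1 _ h'
  · by_contra hn
    by_cases huv : u = v
    · subst huv
      exact hT.1 (f u) h
    · exact hT.asymm h (f.map_rel ((hT'.total huv).resolve_left hn))

end IsTournament

lemma isTournament_W4Edge : IsTournament W4Edge := by
  unfold IsTournament W4Edge
  decide

lemma isTournament_L4Edge : IsTournament L4Edge := by
  unfold IsTournament L4Edge
  decide

lemma isTournament_C5Edge : IsTournament C5Edge := by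
  unfold IsTournament C5Edge
  decide

namespace IsTournament

lemma containsSub_W4Edge (hT : IsTournament E) {s a b c : V} (hab : E a b) (hbc : E b c)
    (hca : E c a) (hsa : E s a) (hsb : E s b) (hsc : E s c) : ContainsSub E W4Edge := by
  refine hT.containsSub_of_relHom isTournament_W4Edge ⟨![s, a, b, c], fun {u v} h => ?_⟩
  fin_cases u <;> fin_cases v <;> simp [W4Edge] at h ⊢ <;> assumption

lemma containsSub_L4Edge (hT : IsTournament E) {s a b c : V} (hab : E a b) (hbc : E b c)
    (hca : E c a) (has : E a s) (hbs : E b s) (hcs : E c s) : ContainsSub E L4Edge := by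
  refine hT.containsSub_of_relHom isTournament_L4Edge ⟨![s, a, b, c], fun {u v} h => ?_⟩
  fin_cases u <;> fin_cases v <;> simp [L4Edge] at h ⊢ <;> assumption

lemma containsSub_C5Edge (hT : IsTournament E) (f : ZMod 5 → V)
    (hf : ∀ i, E (f i) (f (i + 1)) ∧ E (f i) (f (i + 2))) : ContainsSub E C5Edge := by
  refine hT.containsSub_of_relHom isTournament_C5Edge ⟨f, fun {u v} h => ?_⟩
  rcases h with h | h <;> obtain rfl := sub_eq_iff_eq_add'.1 h
  exacts [(hf u).1, (hf u).2]

lemma isTransitive_subtype_of_forall_edge (hT : IsTournament E)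
    (hL4 : ¬ ContainsSub E L4Edge) {P : V → Prop} {s : V} (hs : ∀ v, P v → E v s) :
    IsTransitive fun u v : {v // P v} => E u v := by
  intro a b c hab hbc
  by_contra hac
  have hne : a.1 ≠ c.1 := fun h => hT.asymm hab (h ▸ hbc)
  exact hL4 (hT.containsSub_L4Edge hab hbc ((hT.total hne).resolve_left hac)
    (hs _ a.2) (hs _ b.2) (hs _ c.2))

lemma exists_equiv_fin_of_isTransitive [Fintype V] (hT : IsTournament E)
    (htr : IsTransitive E) :
    ∃ f : Fin (Fintype.card V) ≃ V, ∀ j k, E (f j) (f k) ↔ j < k := by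
  classical
  have : IsStrictTotalOrder V E :=
    { irrefl := hT.1
      trans := htr
      trichotomous := fun a b hab hba => by
        by_contra hne
        exact (hT.total hne).elim hab hba }
  let := linearOrderOfSTO E
  exact ⟨(monoEquivOfFin V rfl).toEquiv, fun j k => (monoEquivOfFin V rfl).lt_iff_lt⟩

lemma edge_iff_of_cyclic_partition (hT : IsTournament E) (p : V → Fin 3)
    (hcross : ∀ u v, p v = p u + 1 → E u v) (u v : V) :
    E u v ↔ p v = p u + 1 ∨ (p u = p v ∧ E u v) := by
  refine ⟨fun h => ?_, fun h => h.elim (hcross u v) And.right⟩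
  have hcases : ∀ a b : Fin 3, b = a + 1 ∨ a = b ∨ a = b + 1 := by decide
  rcases hcases (p u) (p v) with h' | h' | h'
  exacts [Or.inl h', Or.inr ⟨h', h⟩, absurd (hcross v u h') (hT.asymm h)]

lemma isoToT_of_cyclic_partition [Fintype V] (hT : IsTournament E) (p : V → Fin 3)
    (hcross : ∀ u v, p v = p u + 1 → E u v)
    (htrans : ∀ i, IsTransitive fun u v : {v // p v = i} => E u v) :
    IsoToT E (Fintype.card {v // p v = 0}) (Fintype.card {v // p v = 1})
      (Fintype.card {v // p v = 2}) := by
  choose f hf using fun i =>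
    (hT.comap Subtype.val_injective).exists_equiv_fin_of_isTransitive (htrans i)
  let g : CV _ _ _ → V :=
    Sum.elim (fun j => (f 0 j).1) (Sum.elim (fun j => (f 1 j).1) (fun j => (f 2 j).1))
  have hpg : ∀ w, p (g w) = cpart w := by
    rintro (j | j | j) <;> exact (f _ j).2
  have hg_part : ∀ w w', cpart w = cpart w' → (E (g w) (g w') ↔ cidx w < cidx w') := by
    rintro (j | j | j) (k | k | k) h <;> simp only [cpart] at h <;>
      first | exact absurd h (by decide) | exact hf _ j k
  have hg_inj : Function.Injective g := by
    intro w w' h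
    have hpart : cpart w = cpart w' := by simpa only [hpg] using congrArg p h
    rcases w with j | j | j <;> rcases w' with k | k | k <;> simp only [cpart] at hpart <;>
      first
      | exact absurd hpart (by decide)
      | simp only [Sum.inl.injEq, Sum.inr.injEq]; exact (f _).injective (Subtype.ext h)
  have hg_surj : Function.Surjective g := by
    intro v
    obtain h | h | h : p v = 0 ∨ p v = 1 ∨ p v = 2 := by omega
    · exact ⟨.inl ((f 0).symm ⟨v, h⟩), by simp [g]⟩
    · exact ⟨.inr (.inl ((f 1).symm ⟨v, h⟩)), by simp [g]⟩
    · exact ⟨.inr (.inr ((f 2).symm ⟨v, h⟩)), by simp [g]⟩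
  have hg : Function.Bijective g := ⟨hg_inj, hg_surj⟩
  refine ⟨(Equiv.ofBijective g hg).symm, fun u v => ?_⟩
  obtain ⟨w, rfl⟩ := hg_surj u
  obtain ⟨w', rfl⟩ := hg_surj v
  simp only [Equiv.ofBijective_symm_apply_apply]
  rw [edge_iff_of_cyclic_partition hT p hcross, hpg, hpg, TEdge]
  exact or_congr_right (and_congr_right (hg_part w w'))

lemma exists_cyclic_triangle (hT : IsTournament E) (hnt : ¬ IsTransitive E) :
    ∃ t : Fin 3 → V, ∀ i, E (t i) (t (i + 1)) := by
  simp only [IsTransitive, not_forall] at hnt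
  obtain ⟨x, y, z, hxy, hyz, hxz⟩ := hnt
  have hzx : E z x := (hT.total fun h : x = z => hT.asymm hxy (h ▸ hyz)).resolve_left hxz
  refine ⟨![x, y, z], fun i => ?_⟩
  fin_cases i
  exacts [hxy, hyz, hzx]

/-- If `v → u`, comparing `u` with `x` and `v` with `y` yields a `W₄`, an `L₄` or a `C₅`. -/
lemma edge_of_cyclic_triangle (hT : IsTournament E) (hW4 : ¬ ContainsSub E W4Edge)
    (hL4 : ¬ ContainsSub E L4Edge) (hC5 : ¬ ContainsSub E C5Edge) {x y z u v : V}
    (hxy : E x y) (hyz : E y z) (hzx : E z x)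
    (huy : E u y) (hzu : E z u) (hvz : E v z) (hxv : E x v) : E u v := by
  by_cases hux : u = x
  · exact hux ▸ hxv
  by_cases hvy : v = y
  · exact hvy ▸ huy
  by_contra huv
  have hvu : E v u := (hT.total fun h : u = v => hT.asymm hvz (h ▸ hzu)).resolve_left huv
  rcases hT.total hux with hux' | hxu <;> rcases hT.total hvy with hvy' | hyv
  · exact hW4 (hT.containsSub_W4Edge hyz hzu huy hvy' hvz hvu)
  · exact hC5 (hT.containsSub_C5Edge ![x, y, v, z, u] fun i => by
      fin_cases i
      exacts [⟨hxy, hxv⟩, ⟨hyv, hyz⟩, ⟨hvz, hvu⟩, ⟨hzu, hzx⟩, ⟨hux', huy⟩])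
  · exact hL4 (hT.containsSub_L4Edge hxv hvz hzx hxu hvu hzu)
  · exact hW4 (hT.containsSub_W4Edge hyv hvu huy hxy hxv hxu)

end IsTournament

def TriangleClass (E : V → V → Prop) (t : Fin 3 → V) (i : Fin 3) (v : V) : Prop :=
  E v (t (i + 1)) ∧ E (t (i + 2)) v

section TriangleClass

variable {t : Fin 3 → V}

lemma triangleClass_self (ht : ∀ i, E (t i) (t (i + 1))) (i : Fin 3) :
    TriangleClass E t i (t i) := by
  refine ⟨ht i, ?_⟩
  simpa [add_assoc] using ht (i + 2)

lemma TriangleClass.eq (hT : IsTournament E) {i j : Fin 3} {v : V}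
    (hi : TriangleClass E t i v) (hj : TriangleClass E t j v) : i = j := by
  obtain ⟨hi₁, hi₂⟩ := hi
  obtain ⟨hj₁, hj₂⟩ := hj
  fin_cases i <;> fin_cases j <;>
    first
    | rfl
    | exact absurd hi₁ (hT.asymm hj₂)
    | exact absurd hj₁ (hT.asymm hi₂)

lemma exists_triangleClass (hT : IsTournament E) (hW4 : ¬ ContainsSub E W4Edge)
    (hL4 : ¬ ContainsSub E L4Edge) (ht : ∀ i, E (t i) (t (i + 1))) (v : V) :
    ∃ i, TriangleClass E t i v := by
  by_cases hv : ∃ i, v = t i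
  · obtain ⟨i, rfl⟩ := hv
    exact ⟨i, triangleClass_self ht i⟩
  simp only [not_exists] at hv
  rcases hT.total (hv 0) with h0 | h0 <;> rcases hT.total (hv 1) with h1 | h1 <;>
    rcases hT.total (hv 2) with h2 | h2 <;>
    first
    | exact ⟨0, ‹_›, ‹_›⟩
    | exact ⟨1, ‹_›, ‹_›⟩
    | exact ⟨2, ‹_›, ‹_›⟩
    | exact absurd (hT.containsSub_W4Edge (ht 0) (ht 1) (ht 2) h0 h1 h2) hW4
    | exact absurd (hT.containsSub_L4Edge (ht 0) (ht 1) (ht 2) h0 h1 h2) hL4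

lemma TriangleClass.edge_of_succ (hT : IsTournament E) (hW4 : ¬ ContainsSub E W4Edge)
    (hL4 : ¬ ContainsSub E L4Edge) (hC5 : ¬ ContainsSub E C5Edge)
    (ht : ∀ i, E (t i) (t (i + 1))) {i : Fin 3} {u v : V}
    (hu : TriangleClass E t i u) (hv : TriangleClass E t (i + 1) v) : E u v := by
  have hmod3 : ∀ j : Fin 3, j + 1 + 2 = j ∧ j + 1 + 1 = j + 2 ∧ j + 2 + 1 = j := by decide
  obtain ⟨e₁₂, e₁₁, e₂₁⟩ := hmod3 i
  have hyz : E (t (i + 1)) (t (i + 2)) := by simpa only [e₁₁] using ht (i + 1)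
  have hzx : E (t (i + 2)) (t i) := by simpa only [e₂₁] using ht (i + 2)
  obtain ⟨hvz, hxv⟩ : E v (t (i + 2)) ∧ E (t i) v := by
    simpa only [TriangleClass, e₁₂, e₁₁] using hv
  exact hT.edge_of_cyclic_triangle hW4 hL4 hC5 (ht i) hyz hzx hu.1 hu.2 hvz hxv

end TriangleClass

end

theorem stmt5 {V : Type} [Fintype V] (E : V → V → Prop) (hT : IsTournament E)
    (hnt : ¬ IsTransitive E)
    (hW4 : ¬ ContainsSub E W4Edge) (hL4 : ¬ ContainsSub E L4Edge)
    (hC5 : ¬ ContainsSub E C5Edge) :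
    ∃ a b c : ℕ, 0 < a ∧ 0 < b ∧ 0 < c ∧ IsoToT E a b c := by
  obtain ⟨t, ht⟩ := hT.exists_cyclic_triangle hnt
  choose p hp using exists_triangleClass hT hW4 hL4 ht
  have hcross : ∀ u v, p v = p u + 1 → E u v := fun u v h =>
    (hp u).edge_of_succ hT hW4 hL4 hC5 ht (h ▸ hp v)
  have htrans : ∀ i, IsTransitive fun u v : {v // p v = i} => E u v := fun i =>
    hT.isTransitive_subtype_of_forall_edge hL4 (s := t (i + 1)) fun v hv => hv ▸ (hp v).1
  have hpos : ∀ i, 0 < Fintype.card {v // p v = i} := fun i =>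
    Fintype.card_pos_iff.2 ⟨⟨t i, (hp (t i)).eq hT (triangleClass_self ht i)⟩⟩
  exact ⟨_, _, _, hpos 0, hpos 1, hpos 2, hT.isoToT_of_cyclic_partition p hcross htrans⟩

end
end

section
/- Every tournamenton W satisfies t(C₃, W) ≤ 1/8, where C₃ is the cyclically oriented triangle, and equality holds if and only if W is regular. -/
open MeasureTheory

noncomputable section

/-!
For three independent uniform points, `W x y + W y x = 1` makes the weights of the two cyclic
orientations of the triangle and of its three out-stars (a vertex beating both others) sum to `1`:
a transitive triangle has exactly one source, a cyclic one none. Integrating, and using that the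
product measure is invariant under permuting the points, gives `2 t(C₃, W) + 3 ∫ d² = 1` for the
out-degree `d x = ∫ W x y dy`; Fubini and antisymmetry give `∫ d = 1/2`. Hence
`t(C₃, W) = 1/8 - (3/2) Var d`, which is at most `1/8`, with equality iff `d = 1/2` a.e.
-/

open ProbabilityTheory Function

theorem variance_eq_zero_iff_ae_eq_integral {Ω : Type*} [MeasurableSpace Ω] {μ : Measure Ω}
    [IsFiniteMeasure μ] {X : Ω → ℝ} (hX : MemLp X 2 μ) :
    Var[X; μ] = 0 ↔ ∀ᵐ ω ∂μ, X ω = μ[X] := by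
  refine ⟨ae_eq_integral_of_variance_eq_zero hX, fun h => ?_⟩
  rw [variance_eq_integral hX.aemeasurable]
  exact integral_eq_zero_of_ae (by filter_upwards [h] with ω hω; simp [hω])

theorem integral_pi_comp_perm {α ι : Type*} [MeasurableSpace α] {μ : Measure α} [SigmaFinite μ]
    [Fintype ι] (σ : Equiv.Perm ι) (g : (ι → α) → ℝ) :
    ∫ x, g (x ∘ σ) ∂Measure.pi (fun _ => μ) = ∫ x, g x ∂Measure.pi (fun _ => μ) := by
  convert (measurePreserving_piCongrLeft (fun _ : ι => μ) σ.symm).integral_comp' g using 3 with x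
  congr 1
  ext i
  simp [MeasurableEquiv.coe_piCongrLeft, Equiv.piCongrLeft_apply]

theorem integrable_of_nonneg_of_le_one {β : Type*} [MeasurableSpace β] {ν : Measure β}
    [IsFiniteMeasure ν] {f : β → ℝ} (hf : Measurable f) (h0 : ∀ x, 0 ≤ f x)
    (h1 : ∀ x, f x ≤ 1) : Integrable f ν :=
  .of_bound hf.aestronglyMeasurable 1 (.of_forall fun x => by
    rw [Real.norm_of_nonneg (h0 x)]; exact h1 x)

section TournamentKernel

variable {α : Type*} [MeasurableSpace α] {μ : Measure α} {V : α → α → ℝ}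

structure IsTournamentKernel (V : α → α → ℝ) : Prop where
  measurable : Measurable (uncurry V)
  nonneg : ∀ x y, 0 ≤ V x y
  add_swap : ∀ x y, V x y + V y x = 1

def outdeg (μ : Measure α) (V : α → α → ℝ) (x : α) : ℝ := ∫ y, V x y ∂μ

def cyclicTriangle (V : α → α → ℝ) (x : Fin 3 → α) : ℝ :=
  V (x 0) (x 1) * V (x 1) (x 2) * V (x 2) (x 0)

def outStar (V : α → α → ℝ) (x : Fin 3 → α) : ℝ := V (x 0) (x 1) * V (x 0) (x 2)

namespace IsTournamentKernel

variable (hV : IsTournamentKernel V)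
include hV

theorem le_one (x y : α) : V x y ≤ 1 := by
  linarith [hV.add_swap x y, hV.nonneg y x]

theorem measurable_outdeg [SFinite μ] : Measurable (outdeg μ V) :=
  hV.measurable.stronglyMeasurable.integral_prod_right'.measurable

theorem integrable_left [IsFiniteMeasure μ] (x : α) : Integrable (V x) μ :=
  integrable_of_nonneg_of_le_one hV.measurable.of_uncurry_left (hV.nonneg x) (hV.le_one x)

theorem outdeg_nonneg (x : α) : 0 ≤ outdeg μ V x :=
  integral_nonneg (hV.nonneg x)

theorem outdeg_le_one [IsProbabilityMeasure μ] (x : α) : outdeg μ V x ≤ 1 := by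
  simpa [outdeg] using
    integral_mono (hV.integrable_left (μ := μ) x) (integrable_const 1) (hV.le_one x)

theorem memLp_outdeg [IsProbabilityMeasure μ] (p : ENNReal) : MemLp (outdeg μ V) p μ :=
  .of_bound hV.measurable_outdeg.aestronglyMeasurable 1 (.of_forall fun x => by
    rw [Real.norm_of_nonneg (hV.outdeg_nonneg x)]; exact hV.outdeg_le_one x)

theorem integral_outdeg [IsProbabilityMeasure μ] : ∫ x, outdeg μ V x ∂μ = 1 / 2 := by
  have hint : Integrable (uncurry V) (μ.prod μ) := integrable_of_nonneg_of_le_one hV.measurable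
    (fun p => hV.nonneg p.1 p.2) (fun p => hV.le_one p.1 p.2)
  have hcol (y : α) : ∫ x, V x y ∂μ = 1 - outdeg μ V y := by
    calc ∫ x, V x y ∂μ = ∫ x, (1 - V y x) ∂μ :=
          integral_congr_ae (.of_forall fun x => by linarith [hV.add_swap x y])
      _ = 1 - outdeg μ V y := by
          rw [integral_sub (integrable_const 1) (hV.integrable_left y)]; simp [outdeg]
  have hsymm : ∫ x, outdeg μ V x ∂μ = 1 - ∫ x, outdeg μ V x ∂μ := by
    calc ∫ x, outdeg μ V x ∂μ = ∫ y, ∫ x, V x y ∂μ ∂μ := integral_integral_swap hint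
      _ = ∫ y, (1 - outdeg μ V y) ∂μ := by simp_rw [hcol]
      _ = 1 - ∫ x, outdeg μ V x ∂μ := by
          rw [integral_sub (integrable_const 1) (memLp_one_iff_integrable.1 (hV.memLp_outdeg 1))]
          simp
  linarith

theorem cyclicTriangle_nonneg (x : Fin 3 → α) : 0 ≤ cyclicTriangle V x :=
  mul_nonneg (mul_nonneg (hV.nonneg _ _) (hV.nonneg _ _)) (hV.nonneg _ _)

theorem cyclicTriangle_le_one (x : Fin 3 → α) : cyclicTriangle V x ≤ 1 :=
  mul_le_one₀ (mul_le_one₀ (hV.le_one _ _) (hV.nonneg _ _) (hV.le_one _ _)) (hV.nonneg _ _)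
    (hV.le_one _ _)

theorem outStar_nonneg (x : Fin 3 → α) : 0 ≤ outStar V x :=
  mul_nonneg (hV.nonneg _ _) (hV.nonneg _ _)

theorem outStar_le_one (x : Fin 3 → α) : outStar V x ≤ 1 :=
  mul_le_one₀ (hV.le_one _ _) (hV.nonneg _ _) (hV.le_one _ _)

theorem integrable_cyclicTriangle_comp [IsFiniteMeasure μ] (f : Fin 3 → Fin 3) :
    Integrable (fun x => cyclicTriangle V (x ∘ f)) (Measure.pi fun _ => μ) :=
  integrable_of_nonneg_of_le_one
    (by have := hV.measurable; unfold cyclicTriangle; fun_prop)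
    (fun _ => hV.cyclicTriangle_nonneg _) (fun _ => hV.cyclicTriangle_le_one _)

theorem integrable_outStar_comp [IsFiniteMeasure μ] (f : Fin 3 → Fin 3) :
    Integrable (fun x => outStar V (x ∘ f)) (Measure.pi fun _ => μ) :=
  integrable_of_nonneg_of_le_one
    (by have := hV.measurable; unfold outStar; fun_prop)
    (fun _ => hV.outStar_nonneg _) (fun _ => hV.outStar_le_one _)

theorem cyclicTriangle_add_outStar (x : Fin 3 → α) :
    cyclicTriangle V x + cyclicTriangle V (x ∘ Equiv.swap 0 1) +
      (outStar V x + outStar V (x ∘ finRotate 3) + outStar V (x ∘ (finRotate 3).symm)) = 1 := by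
  have hswap : Equiv.swap (0 : Fin 3) 1 2 = 2 := by decide
  simp only [cyclicTriangle, outStar, comp_apply, Equiv.swap_apply_left,
    Equiv.swap_apply_right, hswap, finRotate_apply, finRotate_symm_apply, Fin.reduceAdd,
    Fin.reduceSub, Fin.isValue]
  rw [show V (x 1) (x 0) = 1 - V (x 0) (x 1) by linarith [hV.add_swap (x 0) (x 1)],
    show V (x 2) (x 1) = 1 - V (x 1) (x 2) by linarith [hV.add_swap (x 1) (x 2)],
    show V (x 0) (x 2) = 1 - V (x 2) (x 0) by linarith [hV.add_swap (x 2) (x 0)]]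
  ring

theorem two_mul_integral_cyclicTriangle_add [IsProbabilityMeasure μ] :
    2 * ∫ x, cyclicTriangle V x ∂Measure.pi (fun _ => μ) +
      3 * ∫ x, outStar V x ∂Measure.pi (fun _ => μ) = 1 := by
  have hc := hV.integrable_cyclicTriangle_comp (μ := μ)
  have hs := hV.integrable_outStar_comp (μ := μ)
  calc _ = ∫ x, cyclicTriangle V x ∂Measure.pi (fun _ => μ) +
          ∫ x, cyclicTriangle V (x ∘ Equiv.swap 0 1) ∂Measure.pi (fun _ => μ) +
          (∫ x, outStar V x ∂Measure.pi (fun _ => μ) +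
            ∫ x, outStar V (x ∘ finRotate 3) ∂Measure.pi (fun _ => μ) +
            ∫ x, outStar V (x ∘ (finRotate 3).symm) ∂Measure.pi (fun _ => μ)) := by
        simp only [integral_pi_comp_perm]; ring
    _ = ∫ x, (cyclicTriangle V x + cyclicTriangle V (x ∘ Equiv.swap 0 1) +
          (outStar V x + outStar V (x ∘ finRotate 3) +
            outStar V (x ∘ (finRotate 3).symm))) ∂Measure.pi (fun _ => μ) := by
        symm
        rw [integral_add, integral_add, integral_add, integral_add]
        all_goals first
          | exact hc _ | exact hs _ | exact (hc id).add (hc _)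
          | exact (hs id).add (hs _) | exact ((hs id).add (hs _)).add (hs _)
    _ = 1 := by simp [hV.cyclicTriangle_add_outStar]

theorem integral_outStar [IsProbabilityMeasure μ] :
    ∫ x, outStar V x ∂Measure.pi (fun _ => μ) = ∫ x, outdeg μ V x ^ 2 ∂μ := by
  have := hV.measurable
  let g : α × (Fin 2 → α) → ℝ := fun p => ∏ i, V p.1 (p.2 i)
  have hg : Integrable g (μ.prod (Measure.pi fun _ => μ)) :=
    integrable_of_nonneg_of_le_one (by fun_prop)
      (fun p => Finset.prod_nonneg fun i _ => hV.nonneg _ _)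
      (fun p => Finset.prod_le_one (fun i _ => hV.nonneg _ _) fun i _ => hV.le_one _ _)
  calc ∫ x, outStar V x ∂Measure.pi (fun _ => μ)
      = ∫ x, g (MeasurableEquiv.piFinSuccAbove (fun _ => α) 0 x) ∂Measure.pi (fun _ => μ) := by
        congr 1; ext x
        simp [g, outStar, Fin.prod_univ_two, Fin.tail]
    _ = ∫ p, g p ∂μ.prod (Measure.pi fun _ => μ) :=
        (measurePreserving_piFinSuccAbove (fun _ => μ) 0).integral_comp' g
    _ = ∫ x, outdeg μ V x ^ 2 ∂μ := by
        rw [integral_prod g hg]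
        refine integral_congr_ae (.of_forall fun a => ?_)
        simp only [g]
        rw [integral_fintype_prod_eq_prod (fun _ : Fin 2 => V a)]
        simp [outdeg]

theorem integral_cyclicTriangle [IsProbabilityMeasure μ] :
    ∫ x, cyclicTriangle V x ∂Measure.pi (fun _ => μ) = 1 / 8 - 3 / 2 * Var[outdeg μ V; μ] := by
  have h := hV.two_mul_integral_cyclicTriangle_add (μ := μ)
  have hvar : Var[outdeg μ V; μ] = ∫ x, outdeg μ V x ^ 2 ∂μ - 1 / 4 := by
    rw [variance_eq_sub (hV.memLp_outdeg 2), Pi.pow_def, hV.integral_outdeg]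
    norm_num
  rw [hV.integral_outStar] at h
  linarith

theorem integral_cyclicTriangle_le [IsProbabilityMeasure μ] :
    ∫ x, cyclicTriangle V x ∂Measure.pi (fun _ => μ) ≤ 1 / 8 := by
  rw [hV.integral_cyclicTriangle]
  linarith [variance_nonneg (outdeg μ V) μ]

theorem integral_cyclicTriangle_eq_iff [IsProbabilityMeasure μ] :
    ∫ x, cyclicTriangle V x ∂Measure.pi (fun _ => μ) = 1 / 8 ↔
      ∀ᵐ x ∂μ, outdeg μ V x = 1 / 2 := by
  rw [hV.integral_cyclicTriangle, ← hV.integral_outdeg (μ := μ),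
    ← variance_eq_zero_iff_ae_eq_integral (hV.memLp_outdeg 2)]
  constructor <;> intro h <;> linarith

end IsTournamentKernel

end TournamentKernel

theorem measurableSet_I01 : MeasurableSet I01 := measurableSet_Icc

instance : IsProbabilityMeasure (volume.restrict I01) := ⟨by simp [I01]⟩

-- Values off `[0,1]²` are invisible to every integral below; `1/2` keeps `W x y + W y x = 1`
-- valid everywhere.
open scoped Classical in
def extendByHalf (W : ℝ → ℝ → ℝ) (x y : ℝ) : ℝ := if x ∈ I01 ∧ y ∈ I01 then W x y else 1 / 2

theorem IsTournamenton.isTournamentKernel_extendByHalf {W : ℝ → ℝ → ℝ} (hW : IsTournamenton W) :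
    IsTournamentKernel (extendByHalf W) where
  measurable := Measurable.ite (p := fun z : ℝ × ℝ => z.1 ∈ I01 ∧ z.2 ∈ I01)
    (measurableSet_I01.prod measurableSet_I01) hW.1 measurable_const
  nonneg x y := by
    unfold extendByHalf
    split_ifs with h
    · exact (hW.2 x h.1 y h.2).1
    · norm_num
  add_swap x y := by
    unfold extendByHalf
    by_cases h : x ∈ I01 ∧ y ∈ I01
    · rw [if_pos h, if_pos h.symm]
      exact (hW.2 x h.1 y h.2).2.2
    · rw [if_neg h, if_neg (mt And.symm h)]
      norm_num

theorem homDensity_cycle_eq_integral_cyclicTriangle (W : ℝ → ℝ → ℝ) :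
    homDensity (fun u v : Fin 3 => v = u + 1) W =
      ∫ x, cyclicTriangle (extendByHalf W) x ∂Measure.pi (fun _ => volume.restrict I01) := by
  have hE : (Finset.univ.filter fun p : Fin 3 × Fin 3 => p.2 = p.1 + 1) =
      {(0, 1), (1, 2), (2, 0)} := by
    decide
  rw [homDensity, volume_pi, ← Measure.restrict_pi_pi]
  refine setIntegral_congr_fun (MeasurableSet.univ_pi fun _ => measurableSet_I01) fun x hx => ?_
  have h : ∀ i j, extendByHalf W (x i) (x j) = W (x i) (x j) := fun i j =>
    if_pos ⟨hx i trivial, hx j trivial⟩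
  rw [Finset.filter_congr_decidable, hE]
  simp [cyclicTriangle, h]
  ring

theorem isRegularT_iff_ae_outdeg_eq (W : ℝ → ℝ → ℝ) :
    IsRegularT W ↔
      ∀ᵐ x ∂volume.restrict I01, outdeg (volume.restrict I01) (extendByHalf W) x = 1 / 2 := by
  rw [IsRegularT, ae_restrict_iff' measurableSet_I01]
  refine Filter.eventually_congr (.of_forall fun x => imp_congr_right fun hx => ?_)
  rw [outdeg, setIntegral_congr_fun (f := extendByHalf W x) measurableSet_I01 fun y hy =>
    if_pos ⟨hx, hy⟩]

theorem stmt11 (W : ℝ → ℝ → ℝ) (hW : IsTournamenton W) :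
    homDensity (fun u v : Fin 3 => v = u + 1) W ≤ 1 / 8 ∧
      (homDensity (fun u v : Fin 3 => v = u + 1) W = 1 / 8 ↔ IsRegularT W) := by
  have hV := hW.isTournamentKernel_extendByHalf
  rw [homDensity_cycle_eq_integral_cyclicTriangle, isRegularT_iff_ae_outdeg_eq]
  exact ⟨hV.integral_cyclicTriangle_le, hV.integral_cyclicTriangle_eq_iff⟩

end
end

section
/- Let c be a positive integer and let W be a regular tournamenton. Then t(C[1,1,c], W) = t(B[c], W) / 2. -/
open MeasureTheory

noncomputable section

/-!
Let `K(a,b) = (∫ W(b,t) W(t,a) dt)^c` be the density of `c` two-paths `b → t → a`. Integrating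
out the `c` vertices of the third part gives `t(B[c], W) = ∬ K` and
`t(C[1,1,c], W) = ∬ W(a,b) K(a,b)`. As `W(t,a) = 1 - W(a,t)`, we have
`∫ W(b,t) W(t,a) dt = ∫ W(b,t) dt - ∫ W(a,t) W(b,t) dt`, so for a regular `W` the kernel `K` is
symmetric. Swapping `a` and `b` then shows that `W(a,b) K` and `W(b,a) K` have the same
integral, and the two add up to `∬ K`.
-/

open Function

structure IsTournamentKernel_s12 {α : Type*} [MeasurableSpace α] (W : α → α → ℝ) : Prop where
  measurable : Measurable (uncurry W)
  nonneg : ∀ x y, 0 ≤ W x y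
  add_swap : ∀ x y, W x y + W y x = 1

def twoPathDensity {α : Type*} [MeasurableSpace α] (μ : Measure α) (W : α → α → ℝ) (x y : α) :
    ℝ :=
  ∫ t, W x t * W t y ∂μ

section Kernel

variable {α : Type*} [MeasurableSpace α] {μ : Measure α} {W : α → α → ℝ}

namespace IsTournamentKernel_s12

lemma norm_le_one (hW : IsTournamentKernel_s12 W) (x y : α) : ‖W x y‖ ≤ 1 := by
  rw [Real.norm_of_nonneg (hW.nonneg x y)]
  linarith [hW.nonneg y x, hW.add_swap x y]

lemma integrable_comp {β : Type*} [MeasurableSpace β] {ν : Measure β} [IsFiniteMeasure ν]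
    (hW : IsTournamentKernel_s12 W) {g : β → α × α} (hg : Measurable g) :
    Integrable (fun b => W (g b).1 (g b).2) ν :=
  .of_bound (hW.measurable.comp hg).aestronglyMeasurable 1
    (ae_of_all _ fun _ => hW.norm_le_one _ _)

lemma integrable_mul {β : Type*} [MeasurableSpace β] {ν : Measure β}
    (hW : IsTournamentKernel_s12 W) {g : β → α × α} (hg : Measurable g) {F : β → ℝ}
    (hF : Integrable F ν) : Integrable (fun b => W (g b).1 (g b).2 * F b) ν :=
  hF.bdd_mul (hW.measurable.comp hg).aestronglyMeasurable
    (ae_of_all _ fun _ => hW.norm_le_one _ _)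

lemma integral_mul_eq_half [SFinite μ] (hW : IsTournamentKernel_s12 W) {f : α × α → ℝ}
    (hf : Integrable f (μ.prod μ)) (hsymm : ∀ᵐ p ∂μ.prod μ, f p.swap = f p) :
    ∫ p, W p.1 p.2 * f p ∂μ.prod μ = (∫ p, f p ∂μ.prod μ) / 2 := by
  have hswap : ∫ p, W p.2 p.1 * f p ∂μ.prod μ = ∫ p, W p.1 p.2 * f p ∂μ.prod μ := calc
    _ = ∫ p, W p.2 p.1 * f p.swap ∂μ.prod μ :=
      integral_congr_ae (hsymm.mono fun p hp => by simp only [hp])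
    _ = _ := integral_prod_swap fun p => W p.1 p.2 * f p
  have hsum : ∫ p, f p ∂μ.prod μ
      = ∫ p, W p.1 p.2 * f p ∂μ.prod μ + ∫ p, W p.2 p.1 * f p ∂μ.prod μ := by
    rw [← integral_add (f := fun p => W p.1 p.2 * f p) (g := fun p => W p.2 p.1 * f p)
      (hW.integrable_mul measurable_id hf) (hW.integrable_mul measurable_swap hf)]
    congr 1 with p
    rw [← add_mul, hW.add_swap, one_mul]
  linarith

lemma twoPathDensity_add_integral_mul [IsFiniteMeasure μ] (hW : IsTournamentKernel_s12 W)
    (x y : α) : twoPathDensity μ W x y + ∫ t, W x t * W y t ∂μ = ∫ t, W x t ∂μ := by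
  have hx : Measurable fun t : α => (x, t) := measurable_prodMk_left
  rw [twoPathDensity, ← integral_add
    (hW.integrable_mul hx (hW.integrable_comp (measurable_prodMk_right (y := y))))
    (hW.integrable_mul hx (hW.integrable_comp (measurable_prodMk_left (x := y))))]
  congr 1 with t
  linear_combination W x t * hW.add_swap t y

lemma twoPathDensity_comm [IsFiniteMeasure μ] (hW : IsTournamentKernel_s12 W) {x y : α}
    (hx : ∫ t, W x t ∂μ = 1 / 2) (hy : ∫ t, W y t ∂μ = 1 / 2) :
    twoPathDensity μ W x y = twoPathDensity μ W y x := by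
  have hxy := hW.twoPathDensity_add_integral_mul (μ := μ) x y
  have hyx := hW.twoPathDensity_add_integral_mul (μ := μ) y x
  simp_rw [mul_comm (W y _)] at hyx
  linarith

lemma ae_twoPathDensity_swap [IsFiniteMeasure μ] (hW : IsTournamentKernel_s12 W)
    (hreg : ∀ᵐ x ∂μ, ∫ t, W x t ∂μ = 1 / 2) :
    ∀ᵐ p ∂μ.prod μ, twoPathDensity μ W p.2 p.1 = twoPathDensity μ W p.1 p.2 := by
  filter_upwards [Measure.quasiMeasurePreserving_fst.ae hreg,
    Measure.quasiMeasurePreserving_snd.ae hreg] with p h1 h2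
  exact hW.twoPathDensity_comm h2 h1

lemma measurable_twoPathDensity [SFinite μ] (hW : IsTournamentKernel_s12 W) :
    Measurable (uncurry (twoPathDensity μ W)) :=
  (StronglyMeasurable.integral_prod_right'
    (f := fun q : (α × α) × α => W q.1.1 q.2 * W q.2 q.1.2)
    (by have := hW.measurable; fun_prop : Measurable _).stronglyMeasurable).measurable

lemma norm_twoPathDensity_le_one [IsProbabilityMeasure μ] (hW : IsTournamentKernel_s12 W)
    (x y : α) : ‖twoPathDensity μ W x y‖ ≤ 1 := by
  have hbound : ∀ t, ‖W x t * W t y‖ ≤ 1 := fun t => by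
    rw [norm_mul]
    exact mul_le_one₀ (hW.norm_le_one x t) (norm_nonneg _) (hW.norm_le_one t y)
  have := norm_integral_le_of_norm_le_const (μ := μ) (ae_of_all _ hbound)
  rwa [probReal_univ, mul_one] at this

lemma integrable_twoPathDensity_pow [IsProbabilityMeasure μ] (hW : IsTournamentKernel_s12 W)
    (c : ℕ) : Integrable (fun p : α × α => twoPathDensity μ W p.2 p.1 ^ c) (μ.prod μ) :=
  .of_bound ((hW.measurable_twoPathDensity.comp measurable_swap).pow_const c).aestronglyMeasurable
    1 (ae_of_all _ fun p => by
      rw [norm_pow]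
      exact pow_le_one₀ (norm_nonneg _) (hW.norm_twoPathDensity_le_one _ _))

end IsTournamentKernel_s12

lemma integral_pi_sum {E ι κ : Type*} [NormedAddCommGroup E] [NormedSpace ℝ E] [Fintype ι]
    [Fintype κ] [SigmaFinite μ] {F : (ι ⊕ κ → α) → E} (hF : Integrable F (Measure.pi fun _ => μ)) :
    ∫ x, F x ∂Measure.pi (fun _ => μ)
      = ∫ u, ∫ v, F (Sum.elim u v) ∂Measure.pi (fun _ => μ) ∂Measure.pi (fun _ => μ) := by
  have he := measurePreserving_sumPiEquivProdPi_symm (fun _ : ι ⊕ κ => μ)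
  rw [← he.integral_comp', integral_prod]
  · rfl
  · exact (he.integrable_comp_emb (MeasurableEquiv.measurableEmbedding _)).2 hF

lemma integral_pi_fin_one {E : Type*} [NormedAddCommGroup E] [NormedSpace ℝ E] (f : α → E) :
    ∫ u, f (u 0) ∂Measure.pi (fun _ : Fin 1 => μ) = ∫ a, f a ∂μ :=
  (measurePreserving_funUnique μ (Fin 1)).integral_comp' f

lemma IsTournamentKernel_s12.integral_pi_prod_twoPaths [IsProbabilityMeasure μ]
    (hW : IsTournamentKernel_s12 W) {H : α → α → ℝ} (hH : Measurable (uncurry H))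
    (hH1 : ∀ x y, ‖H x y‖ ≤ 1) (c : ℕ) :
    ∫ x : Fin 1 ⊕ Fin 1 ⊕ Fin c → α, H (x (.inl 0)) (x (.inr (.inl 0))) *
        ∏ i, (W (x (.inr (.inl 0))) (x (.inr (.inr i))) * W (x (.inr (.inr i))) (x (.inl 0)))
        ∂Measure.pi (fun _ => μ)
      = ∫ p, H p.1 p.2 * twoPathDensity μ W p.2 p.1 ^ c ∂μ.prod μ := by
  have hWm := hW.measurable
  have hbound : ∀ a b (y : Fin c → α), ‖H a b * ∏ i, (W b (y i) * W (y i) a)‖ ≤ 1 := by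
    intro a b y
    rw [norm_mul, norm_prod]
    refine mul_le_one₀ (hH1 a b) (by positivity)
      (Finset.prod_le_one (fun _ _ => norm_nonneg _) fun i _ => ?_)
    rw [norm_mul]
    exact mul_le_one₀ (hW.norm_le_one _ _) (norm_nonneg _) (hW.norm_le_one _ _)
  have hinner : ∀ a, ∫ v : Fin 1 ⊕ Fin c → α,
      H a (v (.inl 0)) * ∏ i, (W (v (.inl 0)) (v (.inr i)) * W (v (.inr i)) a)
        ∂Measure.pi (fun _ => μ)
      = ∫ b, H a b * twoPathDensity μ W b a ^ c ∂μ := by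
    intro a
    rw [integral_pi_sum (.of_bound (by fun_prop : Measurable _).aestronglyMeasurable 1
      (ae_of_all _ fun v => hbound _ _ _))]
    have hpow : ∀ b, ∫ y : Fin c → α, ∏ i, (W b (y i) * W (y i) a) ∂Measure.pi (fun _ => μ)
        = twoPathDensity μ W b a ^ c := fun b => by
      simpa [twoPathDensity] using
        integral_fintype_prod_eq_pow (ι := Fin c) (μ := μ) (fun t => W b t * W t a)
    simp only [Sum.elim_inl, Sum.elim_inr, integral_const_mul, hpow]
    exact integral_pi_fin_one (fun b => H a b * twoPathDensity μ W b a ^ c)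
  rw [integral_pi_sum (.of_bound (by fun_prop : Measurable _).aestronglyMeasurable 1
    (ae_of_all _ fun v => hbound _ _ _))]
  simp only [Sum.elim_inl, Sum.elim_inr, hinner]
  rw [integral_pi_fin_one (fun a => ∫ b, H a b * twoPathDensity μ W b a ^ c ∂μ), integral_prod]
  exact (hW.integrable_twoPathDensity_pow c).bdd_mul
    (by fun_prop : Measurable _).aestronglyMeasurable (ae_of_all _ fun p => hH1 _ _)

end Kernel

def unitMeasure : Measure ℝ := volume.restrict I01

instance : IsProbabilityMeasure unitMeasure :=
  ⟨by simp [unitMeasure, I01, Real.volume_Icc]⟩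

lemma volume_restrict_pi_I01 (V : Type) [Fintype V] :
    volume.restrict (Set.univ.pi fun _ : V => I01) = Measure.pi fun _ => unitMeasure := by
  refine (Measure.pi_eq fun s hs => ?_).symm
  rw [Measure.restrict_apply (.univ_pi hs), volume_pi, ← Set.pi_inter_distrib, Measure.pi_pi]
  simp_rw [unitMeasure, Measure.restrict_apply (hs _)]

/- Redefining `W` as `1/2` off `[0,1]²` makes `W x y + W y x = 1` hold everywhere without
changing any homomorphism density. -/
open Classical in
def extendHalf (W : ℝ → ℝ → ℝ) (x y : ℝ) : ℝ :=
  if x ∈ I01 ∧ y ∈ I01 then W x y else 1 / 2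

lemma IsTournamenton.isTournamentKernel_extendHalf {W : ℝ → ℝ → ℝ} (hW : IsTournamenton W) :
    IsTournamentKernel_s12 (extendHalf W) where
  measurable := Measurable.ite (measurableSet_Icc.prod measurableSet_Icc) hW.1 measurable_const
  nonneg x y := by
    unfold extendHalf
    split_ifs with h
    exacts [(hW.2 x h.1 y h.2).1, by norm_num]
  add_swap x y := by
    unfold extendHalf
    by_cases h : x ∈ I01 ∧ y ∈ I01
    · simp [h, (hW.2 x h.1 y h.2).2.2]
    · rw [if_neg h, if_neg fun h' => h h'.symm]
      norm_num

lemma IsRegularT.integral_extendHalf {W : ℝ → ℝ → ℝ} (hreg : IsRegularT W) :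
    ∀ᵐ x ∂unitMeasure, ∫ t, extendHalf W x t ∂unitMeasure = 1 / 2 := by
  filter_upwards [ae_restrict_of_ae hreg, ae_restrict_mem measurableSet_Icc] with x hr hx
  rw [← hr hx]
  refine setIntegral_congr_fun measurableSet_Icc fun t ht => ?_
  simp [extendHalf, hx, ht]

open scoped Classical in
lemma homDensity_eq_integral_extendHalf {V : Type} [Fintype V] (E : V → V → Prop)
    (W : ℝ → ℝ → ℝ) :
    homDensity E W = ∫ x, ∏ p ∈ Finset.univ.filter (fun p : V × V => E p.1 p.2),
      extendHalf W (x p.1) (x p.2) ∂Measure.pi (fun _ => unitMeasure) := by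
  rw [homDensity, ← volume_restrict_pi_I01]
  refine setIntegral_congr_fun (.univ_pi fun _ => measurableSet_Icc) fun x hx =>
    Finset.prod_congr rfl fun p _ => ?_
  simp [extendHalf, hx p.1 trivial, hx p.2 trivial]

open scoped Classical in
lemma prod_filter_BEdge {α M : Type*} [CommMonoid M] (c : ℕ) (f : α → α → M)
    (x : CV 1 1 c → α) :
    ∏ p ∈ Finset.univ.filter (fun p : CV 1 1 c × CV 1 1 c => BEdge c p.1 p.2),
        f (x p.1) (x p.2)
      = ∏ i, (f (x (.inr (.inl 0))) (x (.inr (.inr i))) * f (x (.inr (.inr i))) (x (.inl 0))) := by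
  rw [Finset.prod_filter, Fintype.prod_prod_type]
  simp [Fintype.prod_sum_type, BEdge, cpart, Finset.prod_mul_distrib, mul_comm]

open scoped Classical in
lemma prod_filter_CEdge {α M : Type*} [CommMonoid M] (c : ℕ) (f : α → α → M)
    (x : CV 1 1 c → α) :
    ∏ p ∈ Finset.univ.filter (fun p : CV 1 1 c × CV 1 1 c => CEdge 1 1 c p.1 p.2),
        f (x p.1) (x p.2)
      = f (x (.inl 0)) (x (.inr (.inl 0))) *
        ∏ i, (f (x (.inr (.inl 0))) (x (.inr (.inr i))) * f (x (.inr (.inr i))) (x (.inl 0))) := by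
  rw [Finset.prod_filter, Fintype.prod_prod_type]
  simp [Fintype.prod_sum_type, CEdge, cpart, Finset.prod_mul_distrib]

lemma homDensity_BEdge_eq {W : ℝ → ℝ → ℝ} (hW : IsTournamenton W) (c : ℕ) :
    homDensity (BEdge c) W = ∫ p, twoPathDensity unitMeasure (extendHalf W) p.2 p.1 ^ c
      ∂unitMeasure.prod unitMeasure := by
  rw [homDensity_eq_integral_extendHalf]
  simp_rw [prod_filter_BEdge]
  simpa using hW.isTournamentKernel_extendHalf.integral_pi_prod_twoPaths
    (H := fun _ _ => 1) measurable_const (by simp) c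

lemma homDensity_CEdge_eq {W : ℝ → ℝ → ℝ} (hW : IsTournamenton W) (c : ℕ) :
    homDensity (CEdge 1 1 c) W = ∫ p, extendHalf W p.1 p.2 *
      twoPathDensity unitMeasure (extendHalf W) p.2 p.1 ^ c ∂unitMeasure.prod unitMeasure := by
  have hU := hW.isTournamentKernel_extendHalf
  rw [homDensity_eq_integral_extendHalf]
  simp_rw [prod_filter_CEdge]
  exact hU.integral_pi_prod_twoPaths hU.measurable hU.norm_le_one c

theorem stmt12_general (c : ℕ) (W : ℝ → ℝ → ℝ)
    (hW : IsTournamenton W) (hreg : IsRegularT W) :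
    homDensity (CEdge 1 1 c) W = homDensity (BEdge c) W / 2 := by
  have hU := hW.isTournamentKernel_extendHalf
  rw [homDensity_CEdge_eq hW, homDensity_BEdge_eq hW]
  refine hU.integral_mul_eq_half (hU.integrable_twoPathDensity_pow c) ?_
  filter_upwards [hU.ae_twoPathDensity_swap hreg.integral_extendHalf] with p hp
  rw [Prod.fst_swap, Prod.snd_swap, hp]

theorem stmt12 (c : ℕ) (hc : 0 < c) (W : ℝ → ℝ → ℝ)
    (hW : IsTournamenton W) (hreg : IsRegularT W) :
    homDensity (CEdge 1 1 c) W = homDensity (BEdge c) W / 2 :=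
  stmt12_general c W hW hreg

end
end
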